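/- arXiv:2605.26452 — 4 statements merged into one kernel-verified Lean document; each statement's English description precedes it below -/
import Mathlib

section
/- Fix n_z, n_u, J ∈ ℕ, a matrix A ∈ ℝ^{n_z × n_z}, a matrix B ∈ ℝ^{n_z × n_u}, and for each j ∈ Fin J a vector c_j ∈ ℝ^{n_z}, a scalar d_j ∈ ℝ, a decay parameter η_j ∈ (0,1], and a margin ρ_j ≥ 0. Let z : ℕ → ℝ^{n_z}, u : ℕ → ℝ^{n_u}, r : ℕ → ℝ^{n_z} satisfy z_{t+1} = A·z_t + B·u_t + r_t for all t. Assume residual coverage: for all t and all j, |⟪c_j, r_t⟫| ≤ ρ_j. Assume the robust condition: for all t and all j, ⟪c_j, A·z_t + B·u_t⟫ + d_j ≥ (1 − η_j)·(⟪c_j, z_t⟫ + d_j) + ρ_j. If ⟪c_j, z_0⟫ + d_j ≥ 0 for all j, then ⟪c_j, z_t⟫ + d_j ≥ 0 for all t ∈ ℕ and all j. -/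
/-!
The margin `ρ j` absorbs the worst-case residual, so each barrier `h_j z = c j ⬝ᵥ z + d j` satisfies
`h_j (z (t+1)) ≥ (1 - η j) * h_j (z t)`; since `1 - η j ≥ 0`, nonnegativity propagates by induction.
-/

open Matrix

theorem nonneg_of_mul_le_succ {h : ℕ → ℝ} {a : ℝ} (ha : 0 ≤ a) (h0 : 0 ≤ h 0)
    (hstep : ∀ t, a * h t ≤ h (t + 1)) : ∀ t, 0 ≤ h t
  | 0 => h0
  | t + 1 => (mul_nonneg ha (nonneg_of_mul_le_succ ha h0 hstep t)).trans (hstep t)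

theorem le_dotProduct_add_add_of_abs_dotProduct_le {ι : Type*} [Fintype ι] {c w r : ι → ℝ}
    {d ρ κ : ℝ} (hr : |c ⬝ᵥ r| ≤ ρ) (hw : κ + ρ ≤ c ⬝ᵥ w + d) :
    κ ≤ c ⬝ᵥ (w + r) + d := by
  rw [dotProduct_add]
  linarith [neg_abs_le (c ⬝ᵥ r)]

theorem robust_koopman_cbf_forward_invariance_general
    (nz nu J : ℕ)
    (A : Matrix (Fin nz) (Fin nz) ℝ) (B : Matrix (Fin nz) (Fin nu) ℝ)
    (c : Fin J → Fin nz → ℝ) (d : Fin J → ℝ) (η : Fin J → ℝ) (ρ : Fin J → ℝ)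
    (hη : ∀ j, η j ∈ Set.Ioc (0 : ℝ) 1)
    (z : ℕ → Fin nz → ℝ) (u : ℕ → Fin nu → ℝ) (r : ℕ → Fin nz → ℝ)
    (hdyn : ∀ t : ℕ, z (t + 1) = A.mulVec (z t) + B.mulVec (u t) + r t)
    (hres : ∀ t : ℕ, ∀ j : Fin J, |c j ⬝ᵥ r t| ≤ ρ j)
    (hrob : ∀ t : ℕ, ∀ j : Fin J,
      c j ⬝ᵥ (A.mulVec (z t) + B.mulVec (u t)) + d j ≥
        (1 - η j) * (c j ⬝ᵥ z t + d j) + ρ j)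
    (h0 : ∀ j : Fin J, c j ⬝ᵥ z 0 + d j ≥ 0) :
    ∀ t : ℕ, ∀ j : Fin J, c j ⬝ᵥ z t + d j ≥ 0 := by
  intro t j
  refine nonneg_of_mul_le_succ (h := fun t => c j ⬝ᵥ z t + d j) (sub_nonneg.2 (hη j).2) (h0 j)
    (fun s => ?_) t
  rw [hdyn s]
  exact le_dotProduct_add_add_of_abs_dotProduct_le (hres s j) (hrob s j)

/-- Robust Koopman-CBF forward invariance: under residual coverage
`|⟪c j, r t⟫| ≤ ρ j` and the robust lifted CBF condition, the lifted safe set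
`{z : ⟪c j, z⟫ + d j ≥ 0 for all j}` is forward invariant for the lifted
dynamics `z (t+1) = A z t + B u t + r t`. -/
theorem robust_koopman_cbf_forward_invariance
    (nz nu J : ℕ)
    (A : Matrix (Fin nz) (Fin nz) ℝ) (B : Matrix (Fin nz) (Fin nu) ℝ)
    (c : Fin J → Fin nz → ℝ) (d : Fin J → ℝ) (η : Fin J → ℝ) (ρ : Fin J → ℝ)
    (hη : ∀ j, η j ∈ Set.Ioc (0 : ℝ) 1) (hρ : ∀ j, 0 ≤ ρ j)
    (z : ℕ → Fin nz → ℝ) (u : ℕ → Fin nu → ℝ) (r : ℕ → Fin nz → ℝ)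
    (hdyn : ∀ t : ℕ, z (t + 1) = A.mulVec (z t) + B.mulVec (u t) + r t)
    (hres : ∀ t : ℕ, ∀ j : Fin J, |c j ⬝ᵥ r t| ≤ ρ j)
    (hrob : ∀ t : ℕ, ∀ j : Fin J,
      c j ⬝ᵥ (A.mulVec (z t) + B.mulVec (u t)) + d j ≥
        (1 - η j) * (c j ⬝ᵥ z t + d j) + ρ j)
    (h0 : ∀ j : Fin J, c j ⬝ᵥ z 0 + d j ≥ 0) :
    ∀ t : ℕ, ∀ j : Fin J, c j ⬝ᵥ z t + d j ≥ 0 :=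
  robust_koopman_cbf_forward_invariance_general nz nu J A B c d η ρ hη z u r hdyn hres hrob h0
end

section
/- Fix n_z, n_u ∈ ℕ, matrices A ∈ ℝ^{n_z × n_z} and B ∈ ℝ^{n_z × n_u}, a vector c ∈ ℝ^{n_z}, scalars d ∈ ℝ, η ∈ (0,1], ρ ≥ 0, and points z ∈ ℝ^{n_z}, u ∈ ℝ^{n_u}, r ∈ ℝ^{n_z}. If (i) ⟪c, z⟫ + d ≥ 0, (ii) |⟪c, r⟫| ≤ ρ, and (iii) ⟪c, A·z + B·u⟫ + d ≥ (1 − η)·(⟪c, z⟫ + d) + ρ, then ⟪c, A·z + B·u + r⟫ + d ≥ (1 − η)·(⟪c, z⟫ + d) ≥ 0. -/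
open Matrix

theorem le_dotProduct_add_of_abs_dotProduct_le {ι R : Type*} [Fintype ι]
    [NonUnitalNonAssocRing R] [LinearOrder R] [IsOrderedAddMonoid R] {c x r : ι → R} {b d ρ : R}
    (hx : b + ρ ≤ c ⬝ᵥ x + d) (hr : |c ⬝ᵥ r| ≤ ρ) :
    b ≤ c ⬝ᵥ (x + r) + d :=
  calc b = b + ρ + -ρ := (add_neg_cancel_right b ρ).symm
    _ ≤ c ⬝ᵥ x + d + c ⬝ᵥ r := add_le_add hx (neg_le_of_abs_le hr)
    _ = c ⬝ᵥ (x + r) + d := by rw [dotProduct_add]; abel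

theorem robust_koopman_cbf_one_step_general
    (nz nu : ℕ)
    (A : Matrix (Fin nz) (Fin nz) ℝ) (B : Matrix (Fin nz) (Fin nu) ℝ)
    (c : Fin nz → ℝ) (d η ρ : ℝ)
    (hη : η ∈ Set.Ioc (0 : ℝ) 1)
    (z : Fin nz → ℝ) (u : Fin nu → ℝ) (r : Fin nz → ℝ)
    (hsafe : c ⬝ᵥ z + d ≥ 0)
    (hres : |c ⬝ᵥ r| ≤ ρ)
    (hrob : c ⬝ᵥ (A.mulVec z + B.mulVec u) + d ≥ (1 - η) * (c ⬝ᵥ z + d) + ρ) :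
    c ⬝ᵥ (A.mulVec z + B.mulVec u + r) + d ≥ (1 - η) * (c ⬝ᵥ z + d) ∧
      (1 - η) * (c ⬝ᵥ z + d) ≥ 0 :=
  ⟨le_dotProduct_add_of_abs_dotProduct_le hrob hres, mul_nonneg (sub_nonneg.2 hη.2) hsafe⟩

/-- One-step robust Koopman-CBF guarantee: if `⟪c, z⟫ + d ≥ 0`, the projected
residual is covered (`|⟪c, r⟫| ≤ ρ`), and the robust lifted CBF condition
holds, then the true next barrier value satisfies
`⟪c, A z + B u + r⟫ + d ≥ (1 - η) (⟪c, z⟫ + d) ≥ 0`. -/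
theorem robust_koopman_cbf_one_step
    (nz nu : ℕ)
    (A : Matrix (Fin nz) (Fin nz) ℝ) (B : Matrix (Fin nz) (Fin nu) ℝ)
    (c : Fin nz → ℝ) (d η ρ : ℝ)
    (hη : η ∈ Set.Ioc (0 : ℝ) 1) (hρ : 0 ≤ ρ)
    (z : Fin nz → ℝ) (u : Fin nu → ℝ) (r : Fin nz → ℝ)
    (hsafe : c ⬝ᵥ z + d ≥ 0)
    (hres : |c ⬝ᵥ r| ≤ ρ)
    (hrob : c ⬝ᵥ (A.mulVec z + B.mulVec u) + d ≥ (1 - η) * (c ⬝ᵥ z + d) + ρ) :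
    c ⬝ᵥ (A.mulVec z + B.mulVec u + r) + d ≥ (1 - η) * (c ⬝ᵥ z + d) ∧
      (1 - η) * (c ⬝ᵥ z + d) ≥ 0 :=
  robust_koopman_cbf_one_step_general nz nu A B c d η ρ hη z u r hsafe hres hrob
end

section
/- Let (Ω, P) be a probability space, n ∈ ℕ with n ≥ 1, and X : Fin (n+1) → Ω → ℝ a family of real random variables that is exchangeable, i.e., for every permutation σ of Fin (n+1), the joint law of the random vector (X_{σ(0)}, …, X_{σ(n)}) equals the joint law of (X_0, …, X_n). Fix α ∈ (0,1) and set k = ⌈(n+1)·(1−α)⌉, and assume k ≤ n. Define ρ(ω) to be the k-th smallest value among X_0(ω), …, X_{n−1}(ω) (the k-th order statistic of the first n variables). Then P({ω : X_n(ω) ≤ ρ(ω)}) ≥ 1 − α. -/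
open MeasureTheory

/-- The `k`-th smallest value (1-indexed `k`) among `v 0, …, v (n-1)`:
the `k`-th order statistic of the tuple `v`. Returns `0` if `k - 1` is out of
range. -/
noncomputable def orderStat (n : ℕ) (v : Fin n → ℝ) (k : ℕ) : ℝ :=
  if h : k - 1 < n then v (Tuple.sort v ⟨k - 1, h⟩) else 0

/-!
Let `R i` be the number of coordinates of `(X 0, …, X n)` strictly below `X i`. In any tuple of
`n + 1` reals the `k` smallest entries (in sorted order) have rank `< k`, so
`∑ i, P (R i < k) ≥ k`. Exchangeability makes all the `P (R i < k)` equal, hence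
`P (R n < k) ≥ k / (n + 1) ≥ 1 - α`, and `R n < k` says exactly that `X n` is at most the
`k`-th order statistic of `X 0, …, X (n-1)`.
-/

open scoped ENNReal

section Rank

open Finset

variable {α ι : Type*} [LinearOrder α] [Fintype ι]

lemma Finset.card_filter_comp_perm (σ : Equiv.Perm ι) (p : ι → Prop) [DecidablePred p] :
    #{j | p (σ j)} = #{j | p j} :=
  card_equiv σ (by simp)

lemma Monotone.le_iff_card_filter_lt_le {m : ℕ} {f : Fin m → α} (hf : Monotone f)
    (r : Fin m) (t : α) : t ≤ f r ↔ #{j | f j < t} ≤ r := by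
  constructor
  · intro ht
    calc #{j | f j < t} ≤ #(Iio r) :=
          card_le_card fun j hj => mem_Iio.2 <| hf.reflect_lt <| by
            simpa using (mem_filter.1 hj).2.trans_le ht
      _ = r := Fin.card_Iio r
  · intro hcard
    by_contra! ht
    have hsub : Iic r ⊆ ({j | f j < t} : Finset (Fin m)) := fun j hj =>
      mem_filter.2 ⟨mem_univ j, (hf (mem_Iic.1 hj)).trans_lt ht⟩
    have := card_le_card hsub
    rw [Fin.card_Iic] at this
    omega

lemma le_orderStat_iff {m k : ℕ} (hk : 1 ≤ k) (hkm : k ≤ m) (v : Fin m → ℝ) (t : ℝ) :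
    t ≤ orderStat m v k ↔ #{j | v j < t} < k := by
  rw [orderStat, dif_pos (by omega), ← Function.comp_apply (f := v),
    (Tuple.monotone_sort v).le_iff_card_filter_lt_le,
    ← card_filter_comp_perm (Tuple.sort v) (v · < t)]
  simp only [Function.comp_apply]
  omega

namespace Tuple

def rank (v : ι → α) (i : ι) : ℕ := #{j | v j < v i}

lemma rank_comp_perm (v : ι → α) (σ : Equiv.Perm ι) (i : ι) :
    rank (v ∘ σ) i = rank v (σ i) :=
  card_filter_comp_perm σ (v · < v (σ i))

lemma rank_last {n : ℕ} (v : Fin (n + 1) → α) :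
    rank v (Fin.last n) = #{i : Fin n | v i.castSucc < v (Fin.last n)} := by
  rw [rank, Fin.univ_castSuccEmb, filter_cons, if_neg (lt_irrefl _), filter_map, card_map]
  rfl

lemma le_card_filter_rank_lt {m k : ℕ} (hkm : k ≤ m) (v : Fin m → α) :
    k ≤ #{i | rank v i < k} := by
  set σ := sort v
  have hsmall : ∀ r : Fin m, (r : ℕ) < k → rank v (σ r) < k := fun r hr => by
    rw [← rank_comp_perm]
    exact ((monotone_sort v).le_iff_card_filter_lt_le r _).1 le_rfl |>.trans_lt hr
  calc k = #{r : Fin m | (r : ℕ) < k} := by rw [Fin.card_filter_val_lt, min_eq_right hkm]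
    _ ≤ #{i | rank v i < k} :=
      card_le_card_of_injOn σ (fun r hr => by simpa using hsmall r (by simpa using hr))
        σ.injective.injOn

lemma measurableSet_rank_lt (i : ι) (k : ℕ) : MeasurableSet {v : ι → ℝ | rank v i < k} := by
  have : Measurable fun v : ι → ℝ => rank v i := by
    simp only [rank, card_filter]
    exact Finset.measurable_sum _ fun j _ =>
      Measurable.ite (measurableSet_lt (measurable_pi_apply j) (measurable_pi_apply i))
        measurable_const measurable_const
  exact this measurableSet_Iio

end Tuple

end Rank

section Exchangeable

open scoped Finset

lemma measure_eq_of_map_comp_perm {ι β : Type*} [DecidableEq ι] [MeasurableSpace β]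
    {μ : Measure (ι → β)} (hμ : ∀ σ : Equiv.Perm ι, μ.map (· ∘ σ) = μ)
    {B : ι → Set (ι → β)} (hB : ∀ i, MeasurableSet (B i))
    (hBσ : ∀ (σ : Equiv.Perm ι) i, (· ∘ σ) ⁻¹' B i = B (σ i)) (i j : ι) :
    μ (B i) = μ (B j) := by
  have hσ : Measurable fun v : ι → β => v ∘ Equiv.swap i j := by fun_prop
  calc μ (B i) = μ.map (· ∘ Equiv.swap i j) (B i) := by rw [hμ]
    _ = μ (B j) := by rw [Measure.map_apply hσ (hB i), hBσ, Equiv.swap_apply_left]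

open Classical in
lemma natCast_le_sum_measure {Ω ι : Type*} [MeasurableSpace Ω] [Fintype ι] (μ : Measure Ω)
    [IsProbabilityMeasure μ] {B : ι → Set Ω} (hB : ∀ i, MeasurableSet (B i)) {k : ℕ}
    (hk : ∀ ω, k ≤ #{i | ω ∈ B i}) : (k : ℝ≥0∞) ≤ ∑ i, μ (B i) := by
  calc (k : ℝ≥0∞) = ∫⁻ _, (k : ℝ≥0∞) ∂μ := by simp
    _ ≤ ∫⁻ ω, ∑ i, (B i).indicator 1 ω ∂μ := lintegral_mono fun ω => by
        simp only [Set.indicator_apply, Pi.one_apply, Finset.sum_boole]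
        exact_mod_cast hk ω
    _ = ∑ i, μ (B i) := by
        rw [lintegral_finsetSum _ fun i _ => measurable_one.indicator (hB i)]
        simp only [lintegral_indicator_one (hB _)]

lemma Tuple.natCast_le_mul_measure_rank_lt {m k : ℕ} (hkm : k ≤ m) {μ : Measure (Fin m → ℝ)}
    [IsProbabilityMeasure μ] (hμ : ∀ σ : Equiv.Perm (Fin m), μ.map (· ∘ σ) = μ) (i : Fin m) :
    (k : ℝ≥0∞) ≤ m * μ {v | rank v i < k} := by
  have hB (j : Fin m) := measurableSet_rank_lt j k
  have hBσ (σ : Equiv.Perm (Fin m)) (j : Fin m) :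
      (· ∘ σ) ⁻¹' {v : Fin m → ℝ | rank v j < k} = {v | rank v (σ j) < k} := by
    ext v
    simp [rank_comp_perm]
  calc (k : ℝ≥0∞) ≤ ∑ j, μ {v | rank v j < k} :=
        natCast_le_sum_measure μ hB fun v => by simpa using le_card_filter_rank_lt hkm v
    _ = m * μ {v | rank v i < k} := by
        simp [measure_eq_of_map_comp_perm hμ hB hBσ _ i]

end Exchangeable

theorem split_conformal_coverage_general
    {Ω : Type*} [MeasurableSpace Ω] (P : Measure Ω) [IsProbabilityMeasure P]
    (n : ℕ)
    (X : Fin (n + 1) → Ω → ℝ) (hmeas : ∀ i, Measurable (X i))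
    (hexch : ∀ σ : Equiv.Perm (Fin (n + 1)),
      Measure.map (fun ω => fun i => X (σ i) ω) P =
        Measure.map (fun ω => fun i => X i ω) P)
    (α : ℝ) (hα : α ∈ Set.Ioo (0 : ℝ) 1)
    (k : ℕ) (hk : k = ⌈((n : ℝ) + 1) * (1 - α)⌉₊) (hkn : k ≤ n) :
    P {ω | X (Fin.last n) ω ≤
        orderStat n (fun i : Fin n => X i.castSucc ω) k} ≥
      ENNReal.ofReal (1 - α) := by
  have hceil : ((n : ℝ) + 1) * (1 - α) ≤ k := hk ▸ Nat.le_ceil _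
  have hk1 : 1 ≤ k := hk ▸ Nat.ceil_pos.2 (mul_pos (by positivity) (by linarith [hα.2]))
  set Y : Ω → Fin (n + 1) → ℝ := fun ω i => X i ω
  have hY : Measurable Y := measurable_pi_lambda _ hmeas
  have hμ (σ : Equiv.Perm (Fin (n + 1))) : (P.map Y).map (· ∘ σ) = P.map Y := by
    rw [Measure.map_map (by fun_prop) hY]
    exact hexch σ
  have hevent : {ω | X (Fin.last n) ω ≤ orderStat n (fun i : Fin n => X i.castSucc ω) k} =
      Y ⁻¹' {v | Tuple.rank v (Fin.last n) < k} := by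
    ext ω
    simp [Y, le_orderStat_iff hk1 hkn, Tuple.rank_last]
  have := Measure.isProbabilityMeasure_map (μ := P) hY.aemeasurable
  have hrank := Tuple.natCast_le_mul_measure_rank_lt (hkn.trans n.le_succ) hμ (Fin.last n)
  rw [ge_iff_le, hevent, ← Measure.map_apply hY (Tuple.measurableSet_rank_lt _ k)]
  calc ENNReal.ofReal (1 - α) ≤ k / (n + 1 : ℕ) := by
        rw [ENNReal.le_div_iff_mul_le (by simp) (by simp), ← ENNReal.ofReal_natCast,
          ← ENNReal.ofReal_natCast k, ← ENNReal.ofReal_mul (by linarith [hα.2])]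
        exact ENNReal.ofReal_le_ofReal (by push_cast; linarith)
    _ ≤ _ := ENNReal.div_le_of_le_mul' hrank

/-- Split conformal coverage: if `X 0, …, X n` are exchangeable real random
variables, `α ∈ (0,1)`, `k = ⌈(n+1)(1-α)⌉ ≤ n`, and `ρ ω` is the `k`-th order
statistic of the first `n` variables (the calibration residuals), then the
future residual `X n` satisfies `P (X n ≤ ρ) ≥ 1 - α`. -/
theorem split_conformal_coverage
    {Ω : Type*} [MeasurableSpace Ω] (P : Measure Ω) [IsProbabilityMeasure P]
    (n : ℕ) (hn : 1 ≤ n)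
    (X : Fin (n + 1) → Ω → ℝ) (hmeas : ∀ i, Measurable (X i))
    (hexch : ∀ σ : Equiv.Perm (Fin (n + 1)),
      Measure.map (fun ω => fun i => X (σ i) ω) P =
        Measure.map (fun ω => fun i => X i ω) P)
    (α : ℝ) (hα : α ∈ Set.Ioo (0 : ℝ) 1)
    (k : ℕ) (hk : k = ⌈((n : ℝ) + 1) * (1 - α)⌉₊) (hkn : k ≤ n) :
    P {ω | X (Fin.last n) ω ≤
        orderStat n (fun i : Fin n => X i.castSucc ω) k} ≥
      ENNReal.ofReal (1 - α) :=
  split_conformal_coverage_general P n X hmeas hexch α hα k hk hkn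
end

section
/- Let (Ω, P) be a probability space, n_z, n_u ∈ ℕ, matrices A ∈ ℝ^{n_z × n_z} and B ∈ ℝ^{n_z × n_u}, a vector c ∈ ℝ^{n_z}, scalars d ∈ ℝ, η ∈ (0,1], ρ ≥ 0, α ∈ [0,1], fixed points z ∈ ℝ^{n_z} and u ∈ ℝ^{n_u}, and a random residual r : Ω → ℝ^{n_z} (measurable). Suppose (i) P({ω : |⟪c, r(ω)⟫| ≤ ρ}) ≥ 1 − α, (ii) ⟪c, z⟫ + d ≥ 0, and (iii) ⟪c, A·z + B·u⟫ + d ≥ (1 − η)·(⟪c, z⟫ + d) + ρ. Then P({ω : ⟪c, A·z + B·u + r(ω)⟫ + d ≥ 0}) ≥ 1 − α. -/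
open Matrix MeasureTheory

theorem affine_barrier_add_nonneg_of_abs_le {ι : Type*} [Fintype ι] {c x r : ι → ℝ}
    {d ρ : ℝ} (hx : ρ ≤ c ⬝ᵥ x + d) (hr : |c ⬝ᵥ r| ≤ ρ) : 0 ≤ c ⬝ᵥ (x + r) + d := by
  rw [dotProduct_add]
  linarith [neg_abs_le (c ⬝ᵥ r)]

theorem robust_koopman_cbf_high_probability_safety_general
    {Ω : Type*} [MeasurableSpace Ω] (P : Measure Ω)
    (nz nu : ℕ)
    (A : Matrix (Fin nz) (Fin nz) ℝ) (B : Matrix (Fin nz) (Fin nu) ℝ)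
    (c : Fin nz → ℝ) (d η ρ α : ℝ)
    (hη : η ∈ Set.Ioc (0 : ℝ) 1)
    (z : Fin nz → ℝ) (u : Fin nu → ℝ)
    (r : Ω → Fin nz → ℝ)
    (hcov : P {ω | |c ⬝ᵥ r ω| ≤ ρ} ≥ ENNReal.ofReal (1 - α))
    (hsafe : c ⬝ᵥ z + d ≥ 0)
    (hrob : c ⬝ᵥ (A.mulVec z + B.mulVec u) + d ≥ (1 - η) * (c ⬝ᵥ z + d) + ρ) :
    P {ω | c ⬝ᵥ (A.mulVec z + B.mulVec u + r ω) + d ≥ 0} ≥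
      ENNReal.ofReal (1 - α) := by
  have hmargin : ρ ≤ c ⬝ᵥ (A *ᵥ z + B *ᵥ u) + d :=
    (le_add_of_nonneg_left (mul_nonneg (sub_nonneg.2 hη.2) hsafe)).trans hrob
  exact hcov.trans (measure_mono fun _ hω => affine_barrier_add_nonneg_of_abs_le hmargin hω)

/-- High-probability one-step safety: if the projected residual is covered
with probability at least `1 - α`, the current lifted state is safe, and the
robust Koopman-CBF condition holds, then the true next lifted state is safe
with probability at least `1 - α`. -/
theorem robust_koopman_cbf_high_probability_safety
    {Ω : Type*} [MeasurableSpace Ω] (P : Measure Ω) [IsProbabilityMeasure P]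
    (nz nu : ℕ)
    (A : Matrix (Fin nz) (Fin nz) ℝ) (B : Matrix (Fin nz) (Fin nu) ℝ)
    (c : Fin nz → ℝ) (d η ρ α : ℝ)
    (hη : η ∈ Set.Ioc (0 : ℝ) 1) (hρ : 0 ≤ ρ) (hα : α ∈ Set.Icc (0 : ℝ) 1)
    (z : Fin nz → ℝ) (u : Fin nu → ℝ)
    (r : Ω → Fin nz → ℝ) (hr : Measurable r)
    (hcov : P {ω | |c ⬝ᵥ r ω| ≤ ρ} ≥ ENNReal.ofReal (1 - α))
    (hsafe : c ⬝ᵥ z + d ≥ 0)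
    (hrob : c ⬝ᵥ (A.mulVec z + B.mulVec u) + d ≥ (1 - η) * (c ⬝ᵥ z + d) + ρ) :
    P {ω | c ⬝ᵥ (A.mulVec z + B.mulVec u + r ω) + d ≥ 0} ≥
      ENNReal.ofReal (1 - α) :=
  robust_koopman_cbf_high_probability_safety_general P nz nu A B c d η ρ α hη z u r hcov hsafe hrob
end
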